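/- Let k be a field of characteristic zero and let L ⊆ ℤ[x]^m be a toric ℤ[x]-lattice. Let v_1,…,v_n ∈ ℤ[x]^m be a generating set of the orthogonal complement L^C, and define u_1,…,u_m ∈ ℤ[x]^n by (u_j)_i = (v_i)_j (the u_j are the rows of the matrix with columns v_1,…,v_n). Then the kernel of the monomial substitution homomorphism θ_U : AddMonoidAlgebra k (ℕ[x]^m) → AddMonoidAlgebra k (ℤ[x]^n) determined by θ_U(Y^w) = T^{∑_j w_j·u_j} equals the lattice ideal I_L, the ideal generated by the binomials Y^{f⁺} − Y^{f⁻} for f ∈ L. (Lemma 4.5: every toric difference ideal is the defining ideal of a toric difference variety.) -/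

import Mathlib

/-! The kernel of a monomial map `Y^w ↦ T^(φ w)` is spanned over `k` by the binomials
`Y^a - Y^b` with `φ a = φ b`: subtract from each monomial the monomial of a chosen representative
of its fibre. For `θ_U`, `φ a = φ b` says that `a - b` is orthogonal to `L^C`; a saturated lattice
is its own double orthogonal complement (this is linear algebra over the fraction field of `ℤ[x]`,
and saturation lets one clear the denominators). Finally `Y^a - Y^b = Y^g (Y^(f⁺) - Y^(f⁻))` with
`f = a - b` and `g = min(a, b)`. -/

open Polynomial AddMonoidAlgebra

/-- The coefficientwise positive part of an integer polynomial, as a polynomial over ℕ. -/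
noncomputable def polyPos (p : Polynomial ℤ) : Polynomial ℕ :=
  ⟨AddMonoidAlgebra.ofCoeff (p.toFinsupp.coeff.mapRange Int.toNat Int.toNat_zero)⟩

/-- The coefficientwise positive part of a vector of integer polynomials. -/
noncomputable def vecPos {m : ℕ} (f : Fin m → Polynomial ℤ) : Fin m → Polynomial ℕ :=
  fun i => polyPos (f i)

/-- The coefficientwise negative part of a vector of integer polynomials. -/
noncomputable def vecNeg {m : ℕ} (f : Fin m → Polynomial ℤ) : Fin m → Polynomial ℕ :=
  fun i => polyPos (-(f i))

/-- The additive monoid homomorphism `ℕ[x]^m →+ ℤ[x]^n`, `w ↦ ∑ i, w i • u i`. -/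
noncomputable def expMap {m n : ℕ} (u : Fin m → Fin n → Polynomial ℤ) :
    (Fin m → Polynomial ℕ) →+ (Fin n → Polynomial ℤ) where
  toFun w := ∑ i, ((w i).map (Nat.castRingHom ℤ)) • u i
  map_zero' := by simp
  map_add' a b := by
    simp only [Pi.add_apply, Polynomial.map_add, add_smul]
    exact Finset.sum_add_distrib

/-- The monomial substitution homomorphism `θ_U` with `θ_U(Y^w) = T^{∑ i, w i • u i}`. -/
noncomputable def thetaU (k : Type*) [CommRing k] {m n : ℕ}
    (u : Fin m → Fin n → Polynomial ℤ) :
    AddMonoidAlgebra k (Fin m → Polynomial ℕ) →ₐ[k]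
      AddMonoidAlgebra k (Fin n → Polynomial ℤ) :=
  AddMonoidAlgebra.mapDomainAlgHom k k (expMap u)

/-- The orthogonal complement of a `ℤ[x]`-lattice `L ⊆ ℤ[x]^m`. -/
noncomputable def orthComp {m : ℕ} (L : Submodule (Polynomial ℤ) (Fin m → Polynomial ℤ)) :
    Submodule (Polynomial ℤ) (Fin m → Polynomial ℤ) where
  carrier := {f | ∀ g ∈ L, ∑ i, f i * g i = 0}
  zero_mem' := by intro g hg; simp
  add_mem' := by
    intro a b ha hb g hg
    simp only [Pi.add_apply, add_mul, Finset.sum_add_distrib, ha g hg, hb g hg, add_zero]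
  smul_mem' := by
    intro c a ha g hg
    simp only [Pi.smul_apply, smul_eq_mul, mul_assoc, ← Finset.mul_sum, ha g hg, mul_zero]

namespace AddMonoidAlgebra

variable {k : Type*} [CommRing k] {M N : Type*}

lemma sub_mapDomain_mem_span_single_sub_single {f : M → N} {g : M → M} (hg : ∀ a, f (g a) = f a)
    (x : AddMonoidAlgebra k M) :
    x - mapDomain g x ∈ Submodule.span k
      {q | ∃ a b, f a = f b ∧ q = (single a 1 - single b 1 : AddMonoidAlgebra k M)} := by
  induction x using AddMonoidAlgebra.induction_linear with
  | zero => simp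
  | add x y hx hy =>
    rw [mapDomain_add, add_sub_add_comm]
    exact add_mem hx hy
  | single a r =>
    have hsingle : single a r - single (g a) r =
        r • (single a 1 - single (g a) 1 : AddMonoidAlgebra k M) := by
      rw [smul_sub, smul_single, smul_single, smul_eq_mul, mul_one]
    rw [mapDomain_single, hsingle]
    exact Submodule.smul_mem _ r (Submodule.subset_span ⟨a, g a, (hg a).symm, rfl⟩)

lemma mem_span_single_sub_single_of_mapDomain_eq_zero {f : M → N} {x : AddMonoidAlgebra k M}
    (hx : mapDomain f x = 0) :
    x ∈ Submodule.span k
      {q | ∃ a b, f a = f b ∧ q = (single a 1 - single b 1 : AddMonoidAlgebra k M)} := by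
  cases isEmpty_or_nonempty M
  · have : x = 0 := by ext a; exact isEmptyElim a
    simp [this]
  -- `invFun f ∘ f` picks one point in each fibre of `f`, and kills `x` because `f` does.
  have hfib : ∀ a, f (Function.invFun f (f a)) = f a := fun a => Function.invFun_eq ⟨a, rfl⟩
  have hzero : mapDomain (Function.invFun f ∘ f) x = 0 := by
    have hcomp : mapDomain (Function.invFun f ∘ f) x =
        mapDomain (Function.invFun f) (mapDomain f x) :=
      LinearMap.congr_fun (mapDomainLinearMap_comp (R := k) (S := k) f (Function.invFun f)) x
    rw [hcomp, hx, mapDomain_zero]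
  simpa only [hzero, sub_zero] using
    sub_mapDomain_mem_span_single_sub_single (g := Function.invFun f ∘ f) hfib x

variable [AddCommMonoid M] [AddCommMonoid N]

lemma ker_mapDomainAlgHom (f : M →+ N) :
    RingHom.ker (mapDomainAlgHom k k f) =
      Ideal.span {q | ∃ a b, f a = f b ∧ q = (single a 1 - single b 1 : AddMonoidAlgebra k M)} := by
  apply le_antisymm
  · intro x hx
    apply Submodule.span_le_restrictScalars k (AddMonoidAlgebra k M)
    apply mem_span_single_sub_single_of_mapDomain_eq_zero
    simpa using hx
  · rw [Ideal.span_le]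
    rintro _ ⟨a, b, hab, rfl⟩
    simp [map_sub, hab]

end AddMonoidAlgebra

section Saturation

variable {R : Type*} [CommRing R] {ι : Type*}

lemma exists_smul_eq_compLeft_of_mem_span {S : Submonoid R} {A : Type*} [CommRing A]
    [Algebra R A] [IsLocalization S A] {L : Submodule R (ι → R)} {x : ι → A}
    (hx : x ∈ Submodule.span A ((Algebra.linearMap R A).compLeft ι '' L)) :
    ∃ s : S, ∃ l ∈ L, (Algebra.linearMap R A).compLeft ι l = (s : R) • x := by
  induction hx using Submodule.span_induction with
  | mem x hx =>
    obtain ⟨l, hl, rfl⟩ := hx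
    exact ⟨1, l, hl, by simp⟩
  | zero => exact ⟨1, 0, L.zero_mem, by simp⟩
  | add x y _ _ hx hy =>
    obtain ⟨s, l, hl, hsl⟩ := hx
    obtain ⟨t, l', hl', htl'⟩ := hy
    refine ⟨s * t, (t : R) • l + (s : R) • l', L.add_mem (L.smul_mem _ hl) (L.smul_mem _ hl'), ?_⟩
    rw [map_add, map_smul, map_smul, hsl, htl', smul_add, smul_smul, smul_smul, Submonoid.coe_mul,
      mul_comm (t : R)]
  | smul c x _ hx =>
    obtain ⟨s, l, hl, hsl⟩ := hx
    obtain ⟨⟨a, t⟩, rfl⟩ := IsLocalization.mk'_surjective S c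
    refine ⟨t * s, a • l, L.smul_mem a hl, ?_⟩
    rw [map_smul, hsl, ← algebraMap_smul A a, ← algebraMap_smul A ((t * s : S) : R),
      ← algebraMap_smul A (s : R), smul_smul, smul_smul, Submonoid.coe_mul, map_mul,
      ← IsLocalization.mk'_spec A a t]
    congr 1
    ring

variable [IsDomain R] [Fintype ι]

lemma mem_of_forall_dotProduct_eq_zero_of_saturated {L : Submodule R (ι → R)}
    (hL : ∀ d : R, d ≠ 0 → ∀ w : ι → R, d • w ∈ L → w ∈ L) {f : ι → R}
    (hf : ∀ g : ι → R, (∀ h ∈ L, g ⬝ᵥ h = 0) → g ⬝ᵥ f = 0) : f ∈ L := by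
  classical
  let K := FractionRing R
  let j := (Algebra.linearMap R K).compLeft ι
  have hj : ∀ w, j w = algebraMap R K ∘ w := fun _ => rfl
  have hinj : Function.Injective j := fun a b h =>
    funext fun i => IsFractionRing.injective R K (congr_fun h i)
  have hfW : j f ∈ Submodule.span K (j '' L) := by
    rw [← Subspace.dualAnnihilator_dualCoannihilator_eq (W := Submodule.span K (j '' L)),
      Submodule.mem_dualCoannihilator]
    intro φ hφ
    let c : ι → K := fun i => φ fun i' => if i = i' then 1 else 0
    have hφc : ∀ x, φ x = c ⬝ᵥ x := fun x => by
      rw [LinearMap.pi_apply_eq_sum_univ φ x, dotProduct]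
      exact Finset.sum_congr rfl fun i _ => by rw [smul_eq_mul, mul_comm]
    -- Clearing the denominators of `φ` gives a vector over `R` orthogonal to `L`.
    obtain ⟨d, hd⟩ := IsLocalization.exist_integer_multiples_of_finite (nonZeroDivisors R) c
    choose g hg using hd
    have hdot : ∀ w, algebraMap R K (g ⬝ᵥ w) = (d : R) • φ (j w) := fun w => by
      rw [RingHom.map_dotProduct, hφc, ← hj, ← smul_dotProduct]
      exact congrArg (· ⬝ᵥ j w) (funext hg)
    have hgL : ∀ h ∈ L, g ⬝ᵥ h = 0 := fun h hh => IsFractionRing.injective R K <| by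
      rw [hdot, (Submodule.mem_dualAnnihilator φ).1 hφ _ (Submodule.subset_span ⟨h, hh, rfl⟩),
        smul_zero, map_zero]
    have hdf := hdot f
    rw [hf g hgL, map_zero, eq_comm, smul_eq_zero] at hdf
    exact hdf.resolve_left (nonZeroDivisors.coe_ne_zero d)
  obtain ⟨s, l, hl, hsl⟩ := exists_smul_eq_compLeft_of_mem_span (S := nonZeroDivisors R) hfW
  refine hL s (nonZeroDivisors.coe_ne_zero s) f ?_
  rwa [hinj (hsl.trans (map_smul j _ f).symm)] at hl

end Saturation

open scoped Matrix

lemma mem_iff_mulVec_eq_zero_of_span_eq_orthComp {m n : ℕ} {L : Submodule ℤ[X] (Fin m → ℤ[X])}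
    (htoric : ∀ g : ℤ[X], g ≠ 0 → ∀ w : Fin m → ℤ[X], g • w ∈ L → w ∈ L)
    {v : Fin n → Fin m → ℤ[X]} (hv : Submodule.span ℤ[X] (Set.range v) = orthComp L)
    {f : Fin m → ℤ[X]} : f ∈ L ↔ Matrix.of v *ᵥ f = 0 := by
  have hvL : ∀ j, v j ∈ orthComp L := fun j => hv ▸ Submodule.subset_span ⟨j, rfl⟩
  refine ⟨fun hf => funext fun j => hvL j f hf, fun hvf => ?_⟩
  refine mem_of_forall_dotProduct_eq_zero_of_saturated htoric fun g hg => ?_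
  have hgv : g ∈ Submodule.span ℤ[X] (Set.range v) := hv ▸ hg
  clear hg
  induction hgv using Submodule.span_induction with
  | mem _ hx =>
    obtain ⟨j, rfl⟩ := hx
    exact congrFun hvf j
  | zero => exact zero_dotProduct f
  | add _ _ _ _ hx hy => rw [add_dotProduct, hx, hy, add_zero]
  | smul c _ _ hx => rw [smul_dotProduct, hx, smul_zero]

noncomputable def castVec {m : ℕ} (w : Fin m → ℕ[X]) : Fin m → ℤ[X] :=
  fun i => (w i).map (Nat.castRingHom ℤ)

lemma expMap_eq_vecMul {m n : ℕ} (u : Fin m → Fin n → ℤ[X]) (w : Fin m → ℕ[X]) :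
    expMap u w = castVec w ᵥ* Matrix.of u := by
  funext j
  simp [expMap, castVec, Matrix.vecMul, dotProduct, Finset.sum_apply]

lemma coeff_polyPos (p : ℤ[X]) (c : ℕ) : (polyPos p).coeff c = (p.coeff c).toNat := by
  rcases p with ⟨⟨p⟩⟩
  simp [polyPos, Polynomial.coeff]

lemma map_polyPos_sub_map_polyPos_neg (p : ℤ[X]) :
    (polyPos p).map (Nat.castRingHom ℤ) - (polyPos (-p)).map (Nat.castRingHom ℤ) = p := by
  ext c
  simp only [Polynomial.coeff_sub, Polynomial.coeff_map, coeff_polyPos, Polynomial.coeff_neg,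
    eq_natCast]
  omega

lemma exists_add_polyPos_eq_and_add_polyPos_neg_eq (a b : ℕ[X]) :
    ∃ g : ℕ[X], g + polyPos (a.map (Nat.castRingHom ℤ) - b.map (Nat.castRingHom ℤ)) = a ∧
      g + polyPos (-(a.map (Nat.castRingHom ℤ) - b.map (Nat.castRingHom ℤ))) = b := by
  -- the coefficientwise minimum of `a` and `b`
  refine ⟨polyPos (a.map (Nat.castRingHom ℤ) -
    (polyPos (a.map (Nat.castRingHom ℤ) - b.map (Nat.castRingHom ℤ))).map (Nat.castRingHom ℤ)),
    ?_, ?_⟩ <;>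
  · ext c
    simp only [Polynomial.coeff_add, Polynomial.coeff_sub, Polynomial.coeff_neg,
      Polynomial.coeff_map, coeff_polyPos, eq_natCast]
    omega

lemma castVec_vecPos_sub_castVec_vecNeg {m : ℕ} (f : Fin m → ℤ[X]) :
    castVec (vecPos f) - castVec (vecNeg f) = f :=
  funext fun i => map_polyPos_sub_map_polyPos_neg (f i)

lemma exists_add_vecPos_eq_and_add_vecNeg_eq {m : ℕ} (a b : Fin m → ℕ[X]) :
    ∃ g, g + vecPos (castVec a - castVec b) = a ∧ g + vecNeg (castVec a - castVec b) = b := by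
  choose g hg using fun i => exists_add_polyPos_eq_and_add_polyPos_neg_eq (a i) (b i)
  exact ⟨g, funext fun i => (hg i).1, funext fun i => (hg i).2⟩

theorem kernel_thetaU_eq_lattice_ideal_of_toric_general
    (k : Type*) [Field k] {m n : ℕ}
    (L : Submodule (Polynomial ℤ) (Fin m → Polynomial ℤ))
    (htoric : ∀ g : Polynomial ℤ, g ≠ 0 → ∀ w : Fin m → Polynomial ℤ, g • w ∈ L → w ∈ L)
    (v : Fin n → Fin m → Polynomial ℤ)
    (hv : Submodule.span (Polynomial ℤ) (Set.range v) = orthComp L)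
    (u : Fin m → Fin n → Polynomial ℤ) (hu : ∀ i j, u j i = v i j) :
    RingHom.ker (thetaU k u) =
      Ideal.span ((fun f => (AddMonoidAlgebra.single (vecPos f) 1 :
            AddMonoidAlgebra k (Fin m → Polynomial ℕ)) - AddMonoidAlgebra.single (vecNeg f) 1) ''
        (L : Set (Fin m → Polynomial ℤ))) := by
  have hu' : Matrix.of u = (Matrix.of v)ᵀ := Matrix.ext fun i j => hu j i
  have hexp : ∀ a b, expMap u a = expMap u b ↔ castVec a - castVec b ∈ L := fun a b => by
    rw [mem_iff_mulVec_eq_zero_of_span_eq_orthComp htoric hv, Matrix.mulVec_sub, sub_eq_zero,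
      expMap_eq_vecMul, expMap_eq_vecMul, hu', Matrix.vecMul_transpose, Matrix.vecMul_transpose]
  rw [thetaU, ker_mapDomainAlgHom]
  apply le_antisymm
  · rw [Ideal.span_le]
    rintro _ ⟨a, b, hab, rfl⟩
    obtain ⟨g, ha, hb⟩ := exists_add_vecPos_eq_and_add_vecNeg_eq a b
    have hfactor : (single a 1 - single b 1 : AddMonoidAlgebra k (Fin m → ℕ[X])) =
        single g 1 * (single (vecPos (castVec a - castVec b)) 1 -
          single (vecNeg (castVec a - castVec b)) 1) := by
      rw [mul_sub, single_mul_single, single_mul_single, one_mul, ha, hb]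
    rw [SetLike.mem_coe, hfactor]
    exact Ideal.mul_mem_left _ _ (Ideal.subset_span ⟨_, (hexp a b).1 hab, rfl⟩)
  · rw [Ideal.span_le]
    rintro _ ⟨f, hf, rfl⟩
    refine Ideal.subset_span ⟨vecPos f, vecNeg f, (hexp _ _).2 ?_, rfl⟩
    rwa [castVec_vecPos_sub_castVec_vecNeg]

/-- Lemma 4.5: if `L` is a toric `ℤ[x]`-lattice, `v 0, …, v (n-1)` generate `L^C`, and
`u j i = v i j` (the `u j` are the rows of the matrix with columns `v i`), then the kernel
of the monomial substitution homomorphism `θ_U` equals the lattice ideal `I_L`. -/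
theorem kernel_thetaU_eq_lattice_ideal_of_toric
    (k : Type*) [Field k] [CharZero k] {m n : ℕ}
    (L : Submodule (Polynomial ℤ) (Fin m → Polynomial ℤ))
    (htoric : ∀ g : Polynomial ℤ, g ≠ 0 → ∀ w : Fin m → Polynomial ℤ, g • w ∈ L → w ∈ L)
    (v : Fin n → Fin m → Polynomial ℤ)
    (hv : Submodule.span (Polynomial ℤ) (Set.range v) = orthComp L)
    (u : Fin m → Fin n → Polynomial ℤ) (hu : ∀ i j, u j i = v i j) :
    RingHom.ker (thetaU k u) =
      Ideal.span ((fun f => (AddMonoidAlgebra.single (vecPos f) 1 :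
            AddMonoidAlgebra k (Fin m → Polynomial ℕ)) - AddMonoidAlgebra.single (vecNeg f) 1) ''
        (L : Set (Fin m → Polynomial ℤ))) :=
  kernel_thetaU_eq_lattice_ideal_of_toric_general k L htoric v hv u hu
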